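/- Let 𝒯 be a set of bounded operators on a complex separable Hilbert space H and let {P_n}_{n∈ℕ} be a sequence of non-zero finite-rank orthogonal projections on H. Then {P_n} is a Følner sequence for 𝒯 if and only if {P_n} is a Følner sequence for C*(𝒯, 1), the unital C*-algebra generated by 𝒯 and the identity operator. -/

import Mathlib

open Filter Topology
open scoped ComplexOrder

noncomputable section

variable {H : Type*} [NormedAddCommGroup H] [InnerProductSpace ℂ H] [CompleteSpace H]

/-- `P` is a finite-rank orthogonal projection on the Hilbert space `H`. -/
def IsFinRankProj (P : H →L[ℂ] H) : Prop :=
  IsIdempotentElem P ∧ IsSelfAdjoint P ∧ FiniteDimensional ℂ (LinearMap.range (P : H →ₗ[ℂ] H))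

/-- The Hilbert–Schmidt norm of an operator, computed with respect to the Hilbert basis `b`
(for Hilbert–Schmidt operators it is independent of the choice of `b`). -/
def hsNorm {ι : Type*} (b : HilbertBasis ι ℂ H) (T : H →L[ℂ] H) : ℝ :=
  Real.sqrt (∑' i, ‖T (b i)‖ ^ 2)

/-- The canonical trace of an operator, computed with respect to the Hilbert basis `b`
(for trace-class operators it is independent of the choice of `b`). -/
def trOp {ι : Type*} (b : HilbertBasis ι ℂ H) (T : H →L[ℂ] H) : ℂ :=
  ∑' i, (inner ℂ (b i) (T (b i)) : ℂ)

/-- `{P n}` is a Følner sequence (of non-zero finite-rank orthogonal projections)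
for the set of operators `S ⊆ L(H)`. -/
def IsFolnerSeq {ι : Type*} (b : HilbertBasis ι ℂ H) (S : Set (H →L[ℂ] H))
    (P : ℕ → H →L[ℂ] H) : Prop :=
  (∀ n, IsFinRankProj (P n) ∧ P n ≠ 0) ∧
  ∀ A ∈ S, Tendsto (fun n => hsNorm b (A * P n - P n * A) / hsNorm b (P n)) atTop (𝓝 0)

/-- A proper Følner sequence: an increasing Følner sequence converging strongly to `1`. -/
def IsProperFolnerSeq {ι : Type*} (b : HilbertBasis ι ℂ H) (S : Set (H →L[ℂ] H))
    (P : ℕ → H →L[ℂ] H) : Prop :=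
  IsFolnerSeq b S P ∧ Monotone (fun n => LinearMap.range (P n : H →ₗ[ℂ] H)) ∧
    ∀ x : H, Tendsto (fun n => P n x) atTop (𝓝 x)

/-! The Følner condition for `A` concerns the ratios `‖[A, Pₙ]‖₂ / ‖Pₙ‖₂`. The identities
`[A + B, P] = [A, P] + [B, P]`, `[A * B, P] = A [B, P] + [A, P] B` and, for self-adjoint `P`,
`[A⋆, P] = -[A, P]⋆`, together with `‖X T‖₂, ‖T X‖₂ ≤ ‖X‖ ‖T‖₂`, show that the operators satisfying
the condition form a star subalgebra containing the scalars. Since `‖[A, P]‖₂ ≤ 2 ‖A‖ ‖P‖₂`, each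
ratio is `2`-Lipschitz in `A` for the operator norm, so this subalgebra is norm closed; hence it
contains `C*(𝒯, 1)` as soon as it contains `𝒯`. -/

open scoped ENNReal

theorem ENNReal.Lp_add_le_tsum {ι : Type*} (f g : ι → ℝ≥0∞) {p : ℝ} (hp : 1 ≤ p) :
    (∑' i, (f i + g i) ^ p) ^ (1 / p) ≤ (∑' i, f i ^ p) ^ (1 / p) + (∑' i, g i ^ p) ^ (1 / p) := by
  have hp₀ : 0 < p := zero_lt_one.trans_le hp
  rw [one_div, rpow_inv_le_iff hp₀, ENNReal.tsum_eq_iSup_sum]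
  refine iSup_le fun s => ?_
  rw [← rpow_inv_le_iff hp₀, ← one_div]
  refine (ENNReal.Lp_add_le s f g hp).trans ?_
  gcongr <;> exact ENNReal.sum_le_tsum s

theorem HilbertBasis.tsum_enorm_inner_sq {ι 𝕜 E : Type*} [RCLike 𝕜] [NormedAddCommGroup E]
    [InnerProductSpace 𝕜 E] (b : HilbertBasis ι 𝕜 E) (x : E) :
    ∑' i, ‖(inner 𝕜 (b i) x : 𝕜)‖ₑ ^ 2 = ‖x‖ₑ ^ 2 := by
  have h := lp.hasSum_norm (p := 2) (by norm_num) (b.repr x)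
  simp only [ENNReal.toReal_ofNat, Real.rpow_two, b.repr_apply_apply, b.repr.norm_map] at h
  simp_rw [← ofReal_norm, ← ENNReal.ofReal_pow (norm_nonneg _)]
  rw [← ENNReal.ofReal_tsum_of_nonneg (fun _ => by positivity) h.summable, h.tsum_eq]

section HilbertSchmidt

variable {E ι : Type*} [NormedAddCommGroup E] [InnerProductSpace ℂ E] (b : HilbertBasis ι ℂ E)

-- `hsNorm` with values in `ℝ≥0∞`: the estimates on it then need no summability hypotheses.
def hsENorm (T : E →L[ℂ] E) : ℝ≥0∞ := (∑' i, ‖T (b i)‖ₑ ^ 2) ^ (1 / 2 : ℝ)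

theorem hsNorm_eq_toReal_hsENorm (T : E →L[ℂ] E) : hsNorm b T = (hsENorm b T).toReal := by
  rw [hsNorm, hsENorm, ← ENNReal.toReal_rpow, ENNReal.tsum_toReal_eq (fun _ => by finiteness),
    Real.sqrt_eq_rpow]
  simp only [ENNReal.toReal_pow, toReal_enorm]

theorem hsENorm_add_le (T S : E →L[ℂ] E) : hsENorm b (T + S) ≤ hsENorm b T + hsENorm b S := by
  simp only [hsENorm, ← ENNReal.rpow_two]
  calc (∑' i, ‖(T + S) (b i)‖ₑ ^ (2 : ℝ)) ^ (1 / 2 : ℝ)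
      ≤ (∑' i, (‖T (b i)‖ₑ + ‖S (b i)‖ₑ) ^ (2 : ℝ)) ^ (1 / 2 : ℝ) := by
        gcongr with i; exact enorm_add_le _ _
    _ ≤ _ := ENNReal.Lp_add_le_tsum _ _ one_le_two

theorem hsENorm_neg (T : E →L[ℂ] E) : hsENorm b (-T) = hsENorm b T := by
  simp [hsENorm]

theorem hsENorm_mul_le_left (A T : E →L[ℂ] E) : hsENorm b (A * T) ≤ ‖A‖ₑ * hsENorm b T := by
  calc hsENorm b (A * T) ≤ (∑' i, ‖A‖ₑ ^ 2 * ‖T (b i)‖ₑ ^ 2) ^ (1 / 2 : ℝ) := by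
        rw [hsENorm]; gcongr with i
        rw [← mul_pow]; gcongr; exact A.le_opENorm _
    _ = ‖A‖ₑ * hsENorm b T := by
        rw [ENNReal.tsum_mul_left, ENNReal.mul_rpow_of_nonneg _ _ (by norm_num), hsENorm,
          ← ENNReal.rpow_two, ← ENNReal.rpow_mul]
        norm_num

theorem hsENorm_sub_le (T S : E →L[ℂ] E) : hsENorm b (T - S) ≤ hsENorm b T + hsENorm b S := by
  simpa only [sub_eq_add_neg, hsENorm_neg] using hsENorm_add_le b T (-S)

theorem hsENorm_add_lie_le (A B P : E →L[ℂ] E) :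
    hsENorm b ⁅A + B, P⁆ ≤ hsENorm b ⁅A, P⁆ + hsENorm b ⁅B, P⁆ := by
  have h : ⁅A + B, P⁆ = ⁅A, P⁆ + ⁅B, P⁆ := by simp only [Ring.lie_def]; noncomm_ring
  exact h ▸ hsENorm_add_le b _ _

variable [CompleteSpace E]

-- Both sides are the double sum of `‖⟪b i, T (b j)⟫‖ₑ ^ 2`, taken in opposite orders.
theorem hsENorm_star (T : E →L[ℂ] E) : hsENorm b (star T) = hsENorm b T := by
  have hcol (S : E →L[ℂ] E) (i : ι) :
      ‖S (b i)‖ₑ ^ 2 = ∑' j, ‖(inner ℂ (b j) (S (b i)) : ℂ)‖ₑ ^ 2 :=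
    (b.tsum_enorm_inner_sq _).symm
  have hentry (i j : ι) :
      ‖(inner ℂ (b j) (star T (b i)) : ℂ)‖ₑ = ‖(inner ℂ (b i) (T (b j)) : ℂ)‖ₑ := by
    rw [ContinuousLinearMap.star_eq_adjoint, ContinuousLinearMap.adjoint_inner_right,
      ← inner_conj_symm, RCLike.enorm_conj]
  simp only [hsENorm, hcol, hentry]
  rw [ENNReal.tsum_comm]

theorem hsENorm_mul_le_right (T A : E →L[ℂ] E) : hsENorm b (T * A) ≤ ‖A‖ₑ * hsENorm b T := by
  have hA : ‖star A‖ₑ = ‖A‖ₑ := by simp only [enorm_eq_nnnorm, nnnorm_star]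
  rw [← hsENorm_star, star_mul, ← hA, ← hsENorm_star b T]
  exact hsENorm_mul_le_left b _ _

theorem IsFinRankProj.tsum_enorm_sq_eq_finrank {P : E →L[ℂ] E} (hP : IsFinRankProj P) :
    ∑' i, ‖P (b i)‖ₑ ^ 2 = Module.finrank ℂ (LinearMap.range (P : E →ₗ[ℂ] E)) := by
  obtain ⟨hidem, hsa, hfin⟩ := hP
  set K := LinearMap.range (P : E →ₗ[ℂ] E)
  let e := stdOrthonormalBasis ℂ K
  have hfix (y : K) : P y = y := by
    obtain ⟨_, z, rfl⟩ := y
    exact congr($hidem z)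
  have hnorm (x : E) : ‖P x‖ₑ ^ 2 = ∑ k, ‖(inner ℂ x ((e k : K) : E) : ℂ)‖ₑ ^ 2 := by
    have hsq : ‖P x‖ ^ 2 = ∑ k, ‖(inner ℂ x ((e k : K) : E) : ℂ)‖ ^ 2 := by
      refine (e.sum_sq_norm_inner_left ⟨P x, LinearMap.mem_range_self _ x⟩).symm.trans
        (Finset.sum_congr rfl fun k _ => ?_)
      have hk : inner ℂ (P x) ((e k : K) : E) = inner ℂ x ((e k : K) : E) :=
        (hsa.isSymmetric x (e k)).trans (congrArg _ (hfix (e k)))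
      rw [Submodule.coe_inner, hk]
    simp_rw [← ofReal_norm, ← ENNReal.ofReal_pow (norm_nonneg _), hsq]
    exact ENNReal.ofReal_sum_of_nonneg fun _ _ => by positivity
  simp_rw [hnorm]
  rw [Summable.tsum_finsetSum (fun _ _ => ENNReal.summable)]
  have hunit (k) : ‖((e k : K) : E)‖ₑ = 1 := by
    rw [← ofReal_norm, Submodule.norm_coe, e.orthonormal.1 k, ENNReal.ofReal_one]
  simp [b.tsum_enorm_inner_sq, hunit]

theorem IsFinRankProj.hsENorm_ne_top {P : E →L[ℂ] E} (hP : IsFinRankProj P) :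
    hsENorm b P ≠ ⊤ := by
  rw [hsENorm, hP.tsum_enorm_sq_eq_finrank b]
  exact ENNReal.rpow_ne_top_of_nonneg (by norm_num) (ENNReal.natCast_ne_top _)

theorem hsENorm_lie_le (A P : E →L[ℂ] E) : hsENorm b ⁅A, P⁆ ≤ 2 * ‖A‖ₑ * hsENorm b P :=
  calc hsENorm b ⁅A, P⁆ ≤ hsENorm b (A * P) + hsENorm b (P * A) := hsENorm_sub_le b _ _
    _ ≤ ‖A‖ₑ * hsENorm b P + ‖A‖ₑ * hsENorm b P :=
        add_le_add (hsENorm_mul_le_left b A P) (hsENorm_mul_le_right b P A)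
    _ = 2 * ‖A‖ₑ * hsENorm b P := by ring

theorem hsENorm_mul_lie_le (A B P : E →L[ℂ] E) :
    hsENorm b ⁅A * B, P⁆ ≤ ‖A‖ₑ * hsENorm b ⁅B, P⁆ + ‖B‖ₑ * hsENorm b ⁅A, P⁆ := by
  have h : ⁅A * B, P⁆ = A * ⁅B, P⁆ + ⁅A, P⁆ * B := by simp only [Ring.lie_def]; noncomm_ring
  rw [h]
  exact (hsENorm_add_le b _ _).trans
    (add_le_add (hsENorm_mul_le_left b _ _) (hsENorm_mul_le_right b _ _))

theorem hsENorm_star_lie {P : E →L[ℂ] E} (hP : IsSelfAdjoint P) (A : E →L[ℂ] E) :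
    hsENorm b ⁅star A, P⁆ = hsENorm b ⁅A, P⁆ := by
  have h : ⁅star A, P⁆ = -star ⁅A, P⁆ := by
    rw [Ring.lie_def, Ring.lie_def, star_sub, star_mul, star_mul, hP.star_eq, neg_sub]
  rw [h, hsENorm_neg, hsENorm_star]

end HilbertSchmidt

section FolnerRatio

variable {E ι : Type*} [NormedAddCommGroup E] [InnerProductSpace ℂ E] (b : HilbertBasis ι ℂ E)

def folnerRatio (P A : E →L[ℂ] E) : ℝ := hsNorm b ⁅A, P⁆ / hsNorm b P

variable {P : E →L[ℂ] E}

theorem folnerRatio_nonneg (A : E →L[ℂ] E) : 0 ≤ folnerRatio b P A := by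
  rw [folnerRatio, hsNorm_eq_toReal_hsENorm, hsNorm_eq_toReal_hsENorm]
  positivity

theorem folnerRatio_algebraMap (c : ℂ) : folnerRatio b P (algebraMap ℂ (E →L[ℂ] E) c) = 0 := by
  simp [folnerRatio, (Algebra.commute_algebraMap_left c P).lie_eq, hsNorm]

variable [CompleteSpace E]

theorem folnerRatio_star (hP : IsSelfAdjoint P) (A : E →L[ℂ] E) :
    folnerRatio b P (star A) = folnerRatio b P A := by
  rw [folnerRatio, folnerRatio, hsNorm_eq_toReal_hsENorm, hsENorm_star_lie b hP,
    ← hsNorm_eq_toReal_hsENorm]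

variable (hP : hsENorm b P ≠ ⊤)
include hP

theorem hsENorm_lie_ne_top (A : E →L[ℂ] E) : hsENorm b ⁅A, P⁆ ≠ ⊤ :=
  ne_top_of_le_ne_top (by finiteness) (hsENorm_lie_le b A P)

theorem folnerRatio_le_two_mul_norm (A : E →L[ℂ] E) : folnerRatio b P A ≤ 2 * ‖A‖ := by
  rw [folnerRatio, hsNorm_eq_toReal_hsENorm, hsNorm_eq_toReal_hsENorm]
  refine div_le_of_le_mul₀ ENNReal.toReal_nonneg (by positivity) ?_
  have h := ENNReal.toReal_mono (by finiteness) (hsENorm_lie_le b A P)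
  simpa only [ENNReal.toReal_mul, toReal_enorm, ENNReal.toReal_ofNat] using h

theorem folnerRatio_add_le (A B : E →L[ℂ] E) :
    folnerRatio b P (A + B) ≤ folnerRatio b P A + folnerRatio b P B := by
  simp only [folnerRatio, hsNorm_eq_toReal_hsENorm, ← add_div]
  gcongr
  exact ENNReal.toReal_le_add (hsENorm_add_lie_le b A B P) (hsENorm_lie_ne_top b hP A)
    (hsENorm_lie_ne_top b hP B)

theorem folnerRatio_mul_le (A B : E →L[ℂ] E) :
    folnerRatio b P (A * B) ≤ ‖A‖ * folnerRatio b P B + ‖B‖ * folnerRatio b P A := by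
  simp only [folnerRatio, hsNorm_eq_toReal_hsENorm, mul_div_assoc', ← add_div]
  gcongr
  have h := ENNReal.toReal_le_add (hsENorm_mul_lie_le b A B P)
    (ENNReal.mul_ne_top enorm_ne_top (hsENorm_lie_ne_top b hP B))
    (ENNReal.mul_ne_top enorm_ne_top (hsENorm_lie_ne_top b hP A))
  simpa only [ENNReal.toReal_mul, toReal_enorm] using h

theorem lipschitzWith_folnerRatio : LipschitzWith 2 (folnerRatio b P) := by
  refine LipschitzWith.of_le_add_mul 2 fun A B => ?_
  calc folnerRatio b P A = folnerRatio b P (B + (A - B)) := by rw [add_sub_cancel]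
    _ ≤ folnerRatio b P B + folnerRatio b P (A - B) := folnerRatio_add_le b hP B (A - B)
    _ ≤ folnerRatio b P B + 2 * dist A B := by
        rw [dist_eq_norm]; gcongr; exact folnerRatio_le_two_mul_norm b hP _

end FolnerRatio

section FolnerAlgebra

variable {E ι : Type*} [NormedAddCommGroup E] [InnerProductSpace ℂ E] [CompleteSpace E]
  (b : HilbertBasis ι ℂ E) {P : ℕ → E →L[ℂ] E}

def folnerStarSubalgebra (hHS : ∀ n, hsENorm b (P n) ≠ ⊤) (hsa : ∀ n, IsSelfAdjoint (P n)) :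
    StarSubalgebra ℂ (E →L[ℂ] E) where
  carrier := {A | Tendsto (fun n => folnerRatio b (P n) A) atTop (𝓝 0)}
  add_mem' {A B} hA hB :=
    squeeze_zero (fun n => folnerRatio_nonneg b _) (fun n => folnerRatio_add_le b (hHS n) A B)
      (by simpa using hA.add hB)
  mul_mem' {A B} hA hB :=
    squeeze_zero (fun n => folnerRatio_nonneg b _) (fun n => folnerRatio_mul_le b (hHS n) A B)
      (by simpa using (hB.const_mul ‖A‖).add (hA.const_mul ‖B‖))
  algebraMap_mem' c := by
    simpa only [Set.mem_ofPred_eq, folnerRatio_algebraMap] using tendsto_const_nhds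
  star_mem' {A} hA := by
    simpa only [Set.mem_ofPred_eq, folnerRatio_star b (hsa _)] using hA

theorem isClosed_folnerStarSubalgebra (hHS : ∀ n, hsENorm b (P n) ≠ ⊤)
    (hsa : ∀ n, IsSelfAdjoint (P n)) :
    IsClosed (folnerStarSubalgebra b hHS hsa : Set (E →L[ℂ] E)) := by
  have hequi : Equicontinuous fun n => folnerRatio b (P n) :=
    (LipschitzWith.uniformEquicontinuous _ 2 fun n =>
      lipschitzWith_folnerRatio b (hHS n)).equicontinuous
  exact hequi.isClosed_setOfPred_tendsto continuous_const

end FolnerAlgebra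

theorem folnerSeq_iff_folnerSeq_generated_cstarAlgebra
    {H : Type*} [NormedAddCommGroup H] [InnerProductSpace ℂ H] [CompleteSpace H]
    {ι : Type*} (b : HilbertBasis ι ℂ H)
    (𝒯 : Set (H →L[ℂ] H)) (P : ℕ → H →L[ℂ] H) :
    IsFolnerSeq b 𝒯 P ↔
      IsFolnerSeq b ((StarAlgebra.adjoin ℂ 𝒯).topologicalClosure : Set (H →L[ℂ] H)) P := by
  refine ⟨fun ⟨hP, h𝒯⟩ => ⟨hP, ?_⟩, fun ⟨hP, hC⟩ => ⟨hP, fun A hA => hC A ?_⟩⟩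
  · have hHS n := (hP n).1.hsENorm_ne_top b
    have hsa n := (hP n).1.2.1
    exact fun A hA => StarSubalgebra.topologicalClosure_minimal
      (StarAlgebra.adjoin_le (S := folnerStarSubalgebra b hHS hsa) h𝒯)
      (isClosed_folnerStarSubalgebra b hHS hsa) hA
  · exact subset_closure (StarAlgebra.subset_adjoin ℂ 𝒯 hA)
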